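/- The asymptotic integrated mean squared error is a function of the product λρ only: if λ₁, λ₂ > 0 and ρ₁, ρ₂:[0,1]→(0,∞) are m-times continuously differentiable with λ₁ ρ₁(t) = λ₂ ρ₂(t) for all t ∈ [0,1], then ∫₀¹ { λ₁² r(t)² [((ρ₁ f₀^{(m)})^{(m)})(t)]² + (L₀ / (n λ₁^{1/(2m)})) r(t)^{1−1/(2m)} ρ₁(t)^{-1/(2m)} } dt = ∫₀¹ { λ₂² r(t)² [((ρ₂ f₀^{(m)})^{(m)})(t)]² + (L₀ / (n λ₂^{1/(2m)})) r(t)^{1−1/(2m)} ρ₂(t)^{-1/(2m)} } dt. -/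

import Mathlib

open MeasureTheory Set

noncomputable section

/-- The asymptotic integrated mean squared error for smoothing parameter `λ` and
penalty function `ρ`:
`∫₀¹ { λ² r² [((ρ f₀^{(m)})^{(m)})]² + (L₀/(n λ^{1/(2m)})) r^{1-1/(2m)} ρ^{-1/(2m)} }`. -/
def IMSE (m n : ℕ) (r f0 : ℝ → ℝ) (L0 lam : ℝ) (ρ : ℝ → ℝ) : ℝ :=
  ∫ t in (0 : ℝ)..1,
    (lam ^ 2 * r t ^ 2 *
        (iteratedDeriv m (fun s => ρ s * iteratedDeriv m f0 s) t) ^ 2 +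
      (L0 / (n * lam ^ ((1 : ℝ) / (2 * m)))) *
        r t ^ ((1 : ℝ) - 1 / (2 * m)) * ρ t ^ (-(1 : ℝ) / (2 * m)))

open Filter Topology

/-! Moving `λ` inside, `λ² [(ρ f₀^{(m)})^{(m)}]² = [(λρ f₀^{(m)})^{(m)}]²` and
`λ^{-1/(2m)} ρ^{-1/(2m)} = (λρ)^{-1/(2m)}`, so the integrand only involves `λρ`. At an
interior point `λ₁ρ₁` and `λ₂ρ₂` agree on a neighbourhood, hence so do their iterated
derivatives; the endpoints, where the derivatives also see values outside `[0,1]`, are null. -/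

lemma IMSE_eq_integral_const_mul (m n : ℕ) (r f0 : ℝ → ℝ) (L0 : ℝ) {lam : ℝ} (hlam : 0 ≤ lam)
    {ρ : ℝ → ℝ} (hρ : ∀ t ∈ Icc (0 : ℝ) 1, 0 ≤ ρ t) :
    IMSE m n r f0 L0 lam ρ =
      ∫ t in (0 : ℝ)..1,
        (r t ^ 2 * (iteratedDeriv m (fun s => lam * (ρ s * iteratedDeriv m f0 s)) t) ^ 2 +
          L0 / n * r t ^ ((1 : ℝ) - 1 / (2 * m)) * (lam * ρ t) ^ (-(1 : ℝ) / (2 * m))) := by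
  refine intervalIntegral.integral_congr fun t ht => ?_
  rw [uIcc_of_le zero_le_one] at ht
  have hsplit : (lam * ρ t) ^ (-(1 : ℝ) / (2 * m)) =
      (lam ^ ((1 : ℝ) / (2 * m)))⁻¹ * ρ t ^ (-(1 : ℝ) / (2 * m)) := by
    rw [Real.mul_rpow hlam (hρ t ht), neg_div, Real.rpow_neg hlam]
  simp only [iteratedDeriv_const_mul_field, hsplit]
  ring

theorem IMSE_depends_only_on_lambda_rho_general
    (m n : ℕ)
    (r : ℝ → ℝ)
    (L0 : ℝ)
    (f0 : ℝ → ℝ)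
    (lam1 lam2 : ℝ) (hlam1 : 0 < lam1) (hlam2 : 0 < lam2)
    (ρ1 ρ2 : ℝ → ℝ)
    (hρ1pos : ∀ t ∈ Icc (0 : ℝ) 1, 0 < ρ1 t) (hρ2pos : ∀ t ∈ Icc (0 : ℝ) 1, 0 < ρ2 t)
    (heq : ∀ t ∈ Icc (0 : ℝ) 1, lam1 * ρ1 t = lam2 * ρ2 t) :
    IMSE m n r f0 L0 lam1 ρ1 = IMSE m n r f0 L0 lam2 ρ2 := by
  rw [IMSE_eq_integral_const_mul m n r f0 L0 hlam1.le fun t ht => (hρ1pos t ht).le,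
    IMSE_eq_integral_const_mul m n r f0 L0 hlam2.le fun t ht => (hρ2pos t ht).le]
  refine intervalIntegral.integral_congr_Ioo_of_le zero_le_one fun t ht => ?_
  have hnear : (fun s => lam1 * (ρ1 s * iteratedDeriv m f0 s)) =ᶠ[𝓝 t]
      fun s => lam2 * (ρ2 s * iteratedDeriv m f0 s) :=
    eventually_of_mem (Icc_mem_nhds ht.1 ht.2) fun s hs => by simp only [← mul_assoc, heq s hs]
  simp only [hnear.iteratedDeriv_eq, heq t (Ioo_subset_Icc_self ht)]

/-- the asymptotic integrated mean squared error depends only on the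
product `λ ρ`: if `λ₁ ρ₁ = λ₂ ρ₂` on `[0,1]`, the two integrated mean squared errors
coincide. -/
theorem IMSE_depends_only_on_lambda_rho
    (m n : ℕ) (hm : 1 ≤ m) (hn : 1 ≤ n)
    (r : ℝ → ℝ) (hrc : ContinuousOn r (Icc 0 1))
    (hrpos : ∀ t ∈ Icc (0 : ℝ) 1, 0 < r t)
    (L0 : ℝ) (hL0 : 0 < L0)
    (f0 : ℝ → ℝ) (hf0 : ContDiff ℝ (2 * m) f0)
    (lam1 lam2 : ℝ) (hlam1 : 0 < lam1) (hlam2 : 0 < lam2)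
    (ρ1 ρ2 : ℝ → ℝ) (hρ1 : ContDiff ℝ m ρ1) (hρ2 : ContDiff ℝ m ρ2)
    (hρ1pos : ∀ t ∈ Icc (0 : ℝ) 1, 0 < ρ1 t) (hρ2pos : ∀ t ∈ Icc (0 : ℝ) 1, 0 < ρ2 t)
    (heq : ∀ t ∈ Icc (0 : ℝ) 1, lam1 * ρ1 t = lam2 * ρ2 t) :
    IMSE m n r f0 L0 lam1 ρ1 = IMSE m n r f0 L0 lam2 ρ2 :=
  IMSE_depends_only_on_lambda_rho_general m n r L0 f0 lam1 lam2 hlam1 hlam2 ρ1 ρ2 hρ1pos hρ2pos heq
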